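/- Let A be a finite subset of Z_p. Then for any λ ≠ 0, |Σ_{x∈A} e_p(λx)|^4 ≤ |A|^{-2} · (Σ_s |A_s|^{4/3})^{3/2} · p^{1/2} · E(A)^{1/2}, up to an absolute constant (i.e., |A|·Φ_A^2 ≪ (Σ_s |A_s|^{4/3})^{3/4} p^{1/4} E(A)^{1/4} when A is a multiplicative subgroup of Z_p^*). -/

import Mathlib

open Finset Pointwise

/-- `A` is (the underlying set of) a multiplicative subgroup of `ℤ_p^*`. -/
def mulSubgroup (p : ℕ) (A : Finset (ZMod p)) : Prop :=
  (0 : ZMod p) ∉ A ∧ (1 : ZMod p) ∈ A ∧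
    (∀ x ∈ A, ∀ y ∈ A, x * y ∈ A) ∧ ∀ x ∈ A, x⁻¹ ∈ A

/-- The additive character `e_p(x) = exp(2πi x / p)`. -/
noncomputable def ep (p : ℕ) (x : ZMod p) : ℂ :=
  Complex.exp (2 * Real.pi * Complex.I * (x.val : ℂ) / (p : ℂ))

/-- The additive energy of a finite set. -/
def addEnergy {G : Type*} [AddCommGroup G] [DecidableEq G] (A : Finset G) : ℕ :=
  (((A ×ˢ A) ×ˢ A ×ˢ A).filter fun q => q.1.1 + q.1.2 = q.2.1 + q.2.2).card

/-!
Write `S(t) = ∑_{a ∈ A} e_p(t a)` and `r(s) = |A_s| = #{(x, y) ∈ A² | x - y = s}`, so that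
`|S(t)|² = ∑_s r(s) e_p(t s)`. Since `A` is closed under multiplication and avoids `0`,
`x ↦ a x` permutes `A` for each `a ∈ A`, hence `S(λ a) = S(λ)`; averaging `|S(λ a)|²` over `a ∈ A`
gives `|A| |S(λ)|² = ∑_s r(s) S(λ s)`. Hölder with exponents `4/3` and `4` bounds this by
`(∑_s r(s)^{4/3})^{3/4} (∑_s |S(λ s)|⁴)^{1/4}`, and by Parseval
`∑_t |S(t)|⁴ = ∑_t |∑_s r(s) e_p(t s)|² = p ∑_s r(s)² = p E(A)`.
-/

lemma ep_eq_stdAddChar (p : ℕ) [NeZero p] (x : ZMod p) : ep p x = ZMod.stdAddChar x := by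
  rw [ZMod.stdAddChar_apply, ZMod.toCircle_apply, ep]

namespace Finset

section MulClosed

variable {M : Type*} [MonoidWithZero M] [IsLeftCancelMulZero M] [DecidableEq M] {A : Finset M}

lemma image_mul_left_eq_self (hA0 : (0 : M) ∉ A) (hAmul : ∀ x ∈ A, ∀ y ∈ A, x * y ∈ A)
    {a : M} (ha : a ∈ A) : A.image (a * ·) = A :=
  eq_of_subset_of_card_le (image_subset_iff.2 fun x hx => hAmul a ha x hx)
    (card_image_of_injective _ (mul_right_injective₀ (ne_of_mem_of_not_mem ha hA0))).ge

lemma sum_mul_left_eq_self {β : Type*} [AddCommMonoid β] (hA0 : (0 : M) ∉ A)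
    (hAmul : ∀ x ∈ A, ∀ y ∈ A, x * y ∈ A) {a : M} (ha : a ∈ A) (f : M → β) :
    ∑ x ∈ A, f (a * x) = ∑ x ∈ A, f x := by
  conv_rhs => rw [← image_mul_left_eq_self hA0 hAmul ha]
  exact (sum_image fun x _ y _ h => mul_right_injective₀ (ne_of_mem_of_not_mem ha hA0) h).symm

end MulClosed

variable {G : Type*} [AddCommGroup G] [DecidableEq G]

lemma card_inter_image_add (A : Finset G) (s : G) :
    #(A ∩ A.image (· + s)) = #{q ∈ A ×ˢ A | q.1 - q.2 = s} := by
  refine card_bij' (fun x _ => (x, x - s)) (fun q _ => q.1) ?_ ?_ ?_ ?_ <;>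
    aesop (add simp [sub_eq_add_neg, eq_sub_iff_add_eq])

lemma sum_sub_eq_sum_card_nsmul [Fintype G] {β : Type*} [AddCommMonoid β] (A : Finset G)
    (g : G → β) : ∑ q ∈ A ×ˢ A, g (q.1 - q.2) = ∑ s, #{q ∈ A ×ˢ A | q.1 - q.2 = s} • g s := by
  rw [← sum_fiberwise _ (fun q : G × G => q.1 - q.2)]
  refine sum_congr rfl fun s _ => ?_
  rw [sum_congr rfl fun q hq => congrArg g (mem_filter.1 hq).2, sum_const]

lemma sum_card_filter_sub_sq [Fintype G] (A : Finset G) :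
    ∑ s, #{q ∈ A ×ˢ A | q.1 - q.2 = s} ^ 2 = _root_.addEnergy A := by
  have hcount : ∑ s, #{q ∈ A ×ˢ A | q.1 - q.2 = s} ^ 2
      = #{x ∈ (A ×ˢ A) ×ˢ A ×ˢ A | x.1.1 - x.1.2 = x.2.1 - x.2.2} := by
    calc ∑ s, #{q ∈ A ×ˢ A | q.1 - q.2 = s} ^ 2
        = ∑ s, #{q ∈ A ×ˢ A | q.1 - q.2 = s} • #{q ∈ A ×ˢ A | q.1 - q.2 = s} := by
          simp only [sq, smul_eq_mul]
      _ = ∑ q ∈ A ×ˢ A, #{q' ∈ A ×ˢ A | q'.1 - q'.2 = q.1 - q.2} :=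
          (sum_sub_eq_sum_card_nsmul A _).symm
      _ = _ := by simp only [card_filter, sum_product (A ×ˢ A) (A ×ˢ A), eq_comm]
  rw [hcount, _root_.addEnergy]
  refine card_nbij' (fun x => ((x.1.1, x.2.2), x.2.1, x.1.2))
    (fun x => ((x.1.1, x.2.2), x.2.1, x.1.2)) ?_ ?_ ?_ ?_ <;>
    simp +contextual [Set.MapsTo, Set.LeftInvOn, Set.RightInvOn, sub_eq_sub_iff_add_eq_add]

end Finset

section ExpSum

variable {R : Type*} [CommRing R] (ψ : AddChar R ℂ)

def expSum (A : Finset R) (t : R) : ℂ := ∑ a ∈ A, ψ (t * a)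

variable [Fintype R] [DecidableEq R]

lemma sq_norm_expSum (A : Finset R) (t : R) :
    (‖expSum ψ A t‖ ^ 2 : ℂ) = ∑ s, (#{q ∈ A ×ˢ A | q.1 - q.2 = s} : ℂ) * ψ (t * s) := by
  rw [← Complex.mul_conj', expSum, map_sum, sum_mul_sum, ← sum_product']
  simp_rw [← AddChar.map_neg_eq_conj, ← AddChar.map_add_eq_mul, ← mul_neg, ← mul_add,
    ← sub_eq_add_neg, sum_sub_eq_sum_card_nsmul A (fun s => ψ (t * s)), nsmul_eq_mul]

lemma sum_sq_norm_sum_mul (hψ : ψ.IsPrimitive) (f : R → ℂ) :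
    ∑ t, ‖∑ s, f s * ψ (t * s)‖ ^ 2 = Fintype.card R * ∑ s, ‖f s‖ ^ 2 := by
  have h : ∀ t, (‖∑ s, f s * ψ (t * s)‖ ^ 2 : ℂ)
      = ∑ s, ∑ u, f s * (starRingEnd ℂ) (f u) * ψ (t * (s - u)) := by
    intro t
    rw [← Complex.mul_conj', map_sum, sum_mul_sum]
    simp_rw [map_mul, ← AddChar.map_neg_eq_conj, mul_sub, sub_eq_add_neg, AddChar.map_add_eq_mul]
    refine sum_congr rfl fun s _ => sum_congr rfl fun u _ => by ring
  apply Complex.ofReal_injective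
  push_cast
  calc ∑ t, (‖∑ s, f s * ψ (t * s)‖ : ℂ) ^ 2
      = ∑ s, ∑ u, f s * (starRingEnd ℂ) (f u) * ∑ t, ψ (t * (s - u)) := by
        simp_rw [h, mul_sum]
        rw [sum_comm]
        exact sum_congr rfl fun s _ => sum_comm
    _ = ∑ s, Fintype.card R * (‖f s‖ : ℂ) ^ 2 := by
        simp only [AddChar.sum_mulShift _ hψ, Nat.cast_ite, Nat.cast_zero, sub_eq_zero, mul_ite,
          mul_zero, sum_ite_eq, mem_univ, if_true, Complex.mul_conj']
        exact sum_congr rfl fun s _ => mul_comm _ _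
    _ = Fintype.card R * ∑ s, (‖f s‖ : ℂ) ^ 2 := (mul_sum ..).symm

lemma sum_norm_expSum_pow_four (hψ : ψ.IsPrimitive) (A : Finset R) :
    ∑ t, ‖expSum ψ A t‖ ^ 4 = Fintype.card R * _root_.addEnergy A := by
  have h : ∀ t, ‖expSum ψ A t‖ ^ 4
      = ‖∑ s, (#{q ∈ A ×ˢ A | q.1 - q.2 = s} : ℂ) * ψ (t * s)‖ ^ 2 := fun t => by
    rw [← sq_norm_expSum, norm_pow, Complex.norm_real, norm_norm]
    ring
  simp_rw [h, sum_sq_norm_sum_mul ψ hψ, Complex.norm_natCast, ← sum_card_filter_sub_sq A]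
  push_cast
  rfl

variable [IsDomain R] {ψ} {A : Finset R}

lemma card_mul_sq_norm_expSum (hA0 : (0 : R) ∉ A) (hAmul : ∀ x ∈ A, ∀ y ∈ A, x * y ∈ A)
    (lam : R) :
    (#A : ℂ) * ‖expSum ψ A lam‖ ^ 2
      = ∑ s, (#{q ∈ A ×ˢ A | q.1 - q.2 = s} : ℂ) * expSum ψ A (lam * s) := by
  have hinv : ∀ a ∈ A, expSum ψ A (lam * a) = expSum ψ A lam := fun a ha => by
    simp_rw [expSum, mul_assoc]
    exact sum_mul_left_eq_self hA0 hAmul ha fun x => ψ (lam * x)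
  calc (#A : ℂ) * ‖expSum ψ A lam‖ ^ 2 = ∑ a ∈ A, (‖expSum ψ A (lam * a)‖ ^ 2 : ℂ) := by
        rw [sum_congr rfl fun a ha => by rw [hinv a ha], sum_const, nsmul_eq_mul]
    _ = ∑ a ∈ A, ∑ s, (#{q ∈ A ×ˢ A | q.1 - q.2 = s} : ℂ) * ψ (lam * a * s) := by
        simp_rw [sq_norm_expSum]
    _ = ∑ s, (#{q ∈ A ×ˢ A | q.1 - q.2 = s} : ℂ) * expSum ψ A (lam * s) := by
        rw [sum_comm]
        simp_rw [expSum, mul_sum, mul_right_comm lam]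

lemma card_mul_sq_norm_expSum_le (hψ : ψ.IsPrimitive) (hA0 : (0 : R) ∉ A)
    (hAmul : ∀ x ∈ A, ∀ y ∈ A, x * y ∈ A) {lam : R} (hlam : lam ≠ 0) :
    (#A : ℝ) * ‖expSum ψ A lam‖ ^ 2
      ≤ (∑ s, (#{q ∈ A ×ˢ A | q.1 - q.2 = s} : ℝ) ^ ((4 : ℝ) / 3)) ^ ((3 : ℝ) / 4)
        * (Fintype.card R * _root_.addEnergy A : ℝ) ^ ((1 : ℝ) / 4) := by
  have hmoment : ∑ s, ‖expSum ψ A (lam * s)‖ ^ (4 : ℝ) = Fintype.card R * _root_.addEnergy A := by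
    rw [Fintype.sum_bijective _ (mul_right_injective₀ hlam).bijective_of_finite _
      (fun t => ‖expSum ψ A t‖ ^ (4 : ℝ)) fun _ => rfl]
    simp_rw [Real.rpow_ofNat]
    exact_mod_cast sum_norm_expSum_pow_four ψ hψ A
  have hHolder := Real.inner_le_Lp_mul_Lq_of_nonneg univ
    (f := fun s => (#{q ∈ A ×ˢ A | q.1 - q.2 = s} : ℝ)) (g := fun s => ‖expSum ψ A (lam * s)‖)
    (p := 4 / 3) (q := 4) ⟨by norm_num, by norm_num, by norm_num⟩
    (fun _ _ => Nat.cast_nonneg _) fun _ _ => norm_nonneg _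
  rw [show (1 : ℝ) / (4 / 3) = 3 / 4 by norm_num] at hHolder
  calc (#A : ℝ) * ‖expSum ψ A lam‖ ^ 2
      = ‖∑ s, (#{q ∈ A ×ˢ A | q.1 - q.2 = s} : ℂ) * expSum ψ A (lam * s)‖ := by
        rw [← card_mul_sq_norm_expSum hA0 hAmul, norm_mul, norm_pow, Complex.norm_natCast,
          Complex.norm_real, norm_norm]
    _ ≤ ∑ s, (#{q ∈ A ×ˢ A | q.1 - q.2 = s} : ℝ) * ‖expSum ψ A (lam * s)‖ := by
        refine (norm_sum_le _ _).trans_eq (sum_congr rfl fun s _ => ?_)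
        rw [norm_mul, Complex.norm_natCast]
    _ ≤ _ := hHolder.trans_eq (by rw [hmoment])

end ExpSum

theorem stmt17 :
    ∃ C : ℝ, 0 < C ∧
      ∀ (p : ℕ) [NeZero p], p.Prime →
        ∀ A : Finset (ZMod p), mulSubgroup p A →
          ∀ lam : ZMod p, lam ≠ 0 →
            (A.card : ℝ) * ‖∑ x ∈ A, ep p (lam * x)‖ ^ 2 ≤
              C * (∑ s : ZMod p, ((A ∩ A.image (· + s)).card : ℝ) ^ ((4 : ℝ) / 3))
                    ^ ((3 : ℝ) / 4) *
                (p : ℝ) ^ ((1 : ℝ) / 4) * (addEnergy A : ℝ) ^ ((1 : ℝ) / 4) := by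
  refine ⟨1, one_pos, fun p _ hp A hA lam hlam => ?_⟩
  have : Fact p.Prime := ⟨hp⟩
  have key := card_mul_sq_norm_expSum_le (ZMod.isPrimitive_stdAddChar p) hA.1 hA.2.2.1 hlam
  simp_rw [expSum, ← ep_eq_stdAddChar, ZMod.card, ← card_inter_image_add] at key
  rw [Real.mul_rpow (Nat.cast_nonneg _) (Nat.cast_nonneg _)] at key
  linarith
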